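/- arXiv:math/0701674 — 2 statements merged into one kernel-verified Lean document; each statement's English description precedes it below -/
import Mathlib

section
/- For every j ≥ 1 there exist a constant C_j ≥ 1 and an integer n(j) such that for every monic polynomial p of degree n ≥ n(j) with all zeros in the closed disc of radius A ≥ 1, we have (1/C_j) · n^j/A^j ≤ max_{|z|=2A} |p^{(j)}(z)/p(z)| ≤ C_j · n^j/A^j. -/
/-! Write `p = ∏ₐ (X - a)` over its roots and `uₐ = (z - a)⁻¹`. Leibniz' rule gives
`p⁽ʲ⁾(z) / p(z) = j! eⱼ(u)`, with `eⱼ` the `j`-th elementary symmetric function. On `|z| = 2A`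
every `|uₐ| ≤ 1/A`, so `j! |eⱼ(u)| ≤ j! (n choose j) A⁻ʲ ≤ (n/A)ʲ`.
At `z = 2A` the `uₐ` moreover satisfy `Re uₐ ≥ 1/(9A)`, so `|e₁(u)| ≥ n/(9A)`, and the identity
`(k+2) eₖ₊₂ = e₁ eₖ₊₁ - ∑ₐ uₐ² eₖ(u without uₐ)`, whose last sum is `O(n^(k+1) A^-(k+2))`,
carries `2ᵏ k! |eₖ(u)| ≥ (n/(9A))ᵏ` from `k + 1` to `k + 2` as long as `n` is large compared
with `k`. -/

open Polynomial Nat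

namespace Multiset

variable {R : Type*}

theorem esymm_cons_succ [CommSemiring R] (a : R) (s : Multiset R) (k : ℕ) :
    (a ::ₘ s).esymm (k + 1) = s.esymm (k + 1) + a * s.esymm k := by
  simp only [esymm, powersetCard_cons, map_add, sum_add, map_map, Function.comp_def, prod_cons,
    sum_map_mul_left]

theorem esymm_succ_of_mem [CommSemiring R] [DecidableEq R] {a : R} {s : Multiset R} (ha : a ∈ s)
    (k : ℕ) : s.esymm (k + 1) = (s.erase a).esymm (k + 1) + a * (s.erase a).esymm k := by
  conv_lhs => rw [← cons_erase ha]
  exact esymm_cons_succ a _ k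

theorem succ_mul_esymm_succ [CommSemiring R] [DecidableEq R] (s : Multiset R) (k : ℕ) :
    (k + 1 : R) * s.esymm (k + 1) = (s.map fun a => a * (s.erase a).esymm k).sum := by
  induction s using Multiset.induction_on generalizing k with
  | empty => simp [esymm, powersetCard_zero_right]
  | cons b s ih =>
    have herase : ∀ a ∈ s, (b ::ₘ s).erase a = b ::ₘ s.erase a := fun a ha =>
      erase_cons_tail_of_mem ha
    rw [map_cons, sum_cons, erase_cons_head, map_congr rfl fun a ha => by rw [herase a ha],
      esymm_cons_succ]
    rcases k with _ | k
    · simpa [esymm, add_comm] using congrArg (b + ·) (ih 0)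
    · simp only [esymm_cons_succ, mul_add, sum_map_add]
      have hb : (s.map fun a => a * (b * (s.erase a).esymm k)).sum
          = b * ((k + 1 : R) * s.esymm (k + 1)) := by
        rw [ih k, ← sum_map_mul_left]
        exact congrArg sum (map_congr rfl fun a _ => by ring)
      rw [← ih (k + 1), hb]
      push_cast
      ring

theorem add_two_mul_esymm_add_two [CommRing R] [DecidableEq R] (s : Multiset R) (k : ℕ) :
    (k + 2 : R) * s.esymm (k + 2) =
      s.sum * s.esymm (k + 1) - (s.map fun a => a ^ 2 * (s.erase a).esymm k).sum := by
  have h := succ_mul_esymm_succ s (k + 1)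
  push_cast at h
  rw [add_assoc, one_add_one_eq_two] at h
  rw [h]
  calc (s.map fun a => a * (s.erase a).esymm (k + 1)).sum
      = (s.map fun a => a * s.esymm (k + 1) - a ^ 2 * (s.erase a).esymm k).sum :=
        congrArg sum (map_congr rfl fun a ha => by rw [esymm_succ_of_mem ha]; ring)
    _ = _ := by rw [sum_map_sub, sum_map_mul_right, map_id']

theorem norm_esymm_le [SeminormedCommRing R] [NormOneClass R] (s : Multiset R) (k : ℕ) {B : ℝ}
    (hB : ∀ a ∈ s, ‖a‖ ≤ B) : ‖s.esymm k‖ ≤ (card s).choose k * B ^ k := by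
  induction s using Multiset.induction_on generalizing k with
  | empty => rcases k with _ | k <;> simp [esymm, powersetCard_zero_right]
  | cons a s ih =>
    rcases k with _ | k
    · simp [esymm]
    have ha : ‖a‖ ≤ B := hB a (mem_cons_self a s)
    have hs : ∀ b ∈ s, ‖b‖ ≤ B := fun b hb => hB b (mem_cons_of_mem hb)
    calc ‖(a ::ₘ s).esymm (k + 1)‖
        ≤ ‖s.esymm (k + 1)‖ + ‖a‖ * ‖s.esymm k‖ := by
          rw [esymm_cons_succ]
          exact (norm_add_le _ _).trans (add_le_add_right (norm_mul_le _ _) _)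
      _ ≤ (card s).choose (k + 1) * B ^ (k + 1) + B * ((card s).choose k * B ^ k) := by
          gcongr
          · exact ih (k + 1) hs
          · exact (norm_nonneg a).trans ha
          · exact ih k hs
      _ = (card (a ::ₘ s)).choose (k + 1) * B ^ (k + 1) := by
          rw [card_cons, choose_succ_succ']
          push_cast
          ring

theorem factorial_mul_norm_esymm_le [SeminormedCommRing R] [NormOneClass R] (s : Multiset R)
    (k : ℕ) {B : ℝ} (hB₀ : 0 ≤ B) (hB : ∀ a ∈ s, ‖a‖ ≤ B) :
    k ! * ‖s.esymm k‖ ≤ (card s * B) ^ k := by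
  have hchoose : (k ! : ℝ) * (card s).choose k ≤ (card s : ℝ) ^ k := by
    rw [← le_div_iff₀' (by positivity)]
    exact choose_le_pow_div k (card s)
  calc k ! * ‖s.esymm k‖ ≤ k ! * ((card s).choose k * B ^ k) := by
        gcongr; exact norm_esymm_le s k hB
    _ ≤ (card s) ^ k * B ^ k := by rw [← mul_assoc]; gcongr
    _ = (card s * B) ^ k := (mul_pow _ _ _).symm

theorem norm_sum_map_le_card_mul {ι E : Type*} [SeminormedAddCommGroup E] (s : Multiset ι)
    (f : ι → E) {c : ℝ} (h : ∀ i ∈ s, ‖f i‖ ≤ c) : ‖(s.map f).sum‖ ≤ card s * c :=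
  calc ‖(s.map f).sum‖ ≤ (s.map fun i => ‖f i‖).sum := by
        simpa only [map_map, Function.comp_def] using norm_multiset_sum_le (s.map f)
    _ ≤ (s.map fun _ => c).sum := sum_map_le_sum_map _ _ h
    _ = card s * c := by simp

theorem card_mul_le_re_sum {s : Multiset ℂ} {b : ℝ} (h : ∀ u ∈ s, b ≤ u.re) :
    card s * b ≤ s.sum.re := by
  rw [show s.sum.re = (s.map Complex.re).sum from map_multiset_sum Complex.reAddGroupHom s]
  simpa using card_nsmul_le_sum (s := s.map Complex.re) (a := b) (by simpa using h)

theorem norm_sum_mul_norm_esymm_le {𝕜 : Type*} [NormedField 𝕜] [DecidableEq 𝕜]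
    (s : Multiset 𝕜) (k : ℕ) {B : ℝ} (hB₀ : 0 ≤ B) (hB : ∀ a ∈ s, ‖a‖ ≤ B) :
    ‖s.sum‖ * ‖s.esymm (k + 1)‖ ≤
      (k + 2) * ‖s.esymm (k + 2)‖ + card s ^ (k + 1) * B ^ (k + 2) := by
  have hterm : ∀ a ∈ s, ‖a ^ 2 * (s.erase a).esymm k‖ ≤ B ^ 2 * (card s ^ k * B ^ k) := by
    intro a ha
    have hchoose : ((card (s.erase a)).choose k : ℝ) ≤ card s ^ k := by
      exact_mod_cast (choose_le_pow _ k).trans (Nat.pow_le_pow_left card_erase_le k)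
    rw [norm_mul, norm_pow]
    gcongr
    · exact hB a ha
    · exact (norm_esymm_le _ k fun b hb => hB b (mem_of_mem_erase hb)).trans (by gcongr)
  have herror : ‖s.sum * s.esymm (k + 1) - (k + 2 : 𝕜) * s.esymm (k + 2)‖
      ≤ card s ^ (k + 1) * B ^ (k + 2) := by
    rw [add_two_mul_esymm_add_two, sub_sub_cancel]
    calc _ ≤ card s * (B ^ 2 * (card s ^ k * B ^ k)) := norm_sum_map_le_card_mul s _ hterm
      _ = card s ^ (k + 1) * B ^ (k + 2) := by ring
  have hcast : ‖(k + 2 : 𝕜)‖ ≤ k + 2 := by simpa using Nat.norm_cast_le (α := 𝕜) (k + 2)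
  calc ‖s.sum‖ * ‖s.esymm (k + 1)‖
      ≤ ‖(k + 2 : 𝕜) * s.esymm (k + 2)‖ +
          ‖s.sum * s.esymm (k + 1) - (k + 2 : 𝕜) * s.esymm (k + 2)‖ := by
        rw [← norm_mul]
        exact norm_le_insert' _ _
    _ ≤ (k + 2) * ‖s.esymm (k + 2)‖ + card s ^ (k + 1) * B ^ (k + 2) := by
        rw [norm_mul]; gcongr

theorem card_mul_pow_le_norm_esymm {s : Multiset ℂ} {b K : ℝ} (hb : 0 ≤ b)
    (hK : 1 ≤ K) (hre : ∀ u ∈ s, b ≤ u.re) (hnorm : ∀ u ∈ s, ‖u‖ ≤ K * b) (k : ℕ)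
    (hk : 2 ^ k * k ! * K ^ k ≤ card s) : (card s * b) ^ k ≤ 2 ^ k * k ! * ‖s.esymm k‖ := by
  have hsum : card s * b ≤ ‖s.sum‖ := (card_mul_le_re_sum hre).trans (Complex.re_le_norm _)
  induction k using Nat.twoStepInduction with
  | zero => simp [esymm]
  | one =>
    have he : s.esymm 1 = s.sum := by simp [esymm, powersetCard_one, map_map]
    rw [he, pow_one, pow_one, factorial_one, cast_one, mul_one]
    linarith [norm_nonneg s.sum]
  | more k _ ih =>
    set n : ℝ := (card s : ℝ)
    set c : ℝ := 2 ^ (k + 1) * (k + 1)!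
    have hconst : (2 ^ (k + 2) * (k + 2)! : ℝ) = 2 * c * (k + 2) := by
      simp only [c, factorial_succ (k + 1)]
      push_cast
      ring
    have hthreshold : 2 * c * K ^ (k + 2) ≤ n := by
      refine le_trans ?_ hk
      have hpos : 0 ≤ 2 * c * K ^ (k + 2) := by positivity
      rw [hconst]
      nlinarith [(k.cast_nonneg : (0 : ℝ) ≤ k)]
    have hE1 : (n * b) ^ (k + 1) ≤ c * ‖s.esymm (k + 1)‖ := by
      refine ih (le_trans ?_ hthreshold)
      have hc : 0 ≤ c := by positivity
      have hKpow : K ^ (k + 1) ≤ K ^ (k + 2) := pow_le_pow_right₀ hK (by omega)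
      nlinarith [mul_le_mul_of_nonneg_left hKpow hc,
        mul_nonneg hc (pow_nonneg (zero_le_one.trans hK) (k + 2))]
    have hsmall : 2 * c * (n ^ (k + 1) * (K * b) ^ (k + 2)) ≤ (n * b) ^ (k + 2) :=
      calc 2 * c * (n ^ (k + 1) * (K * b) ^ (k + 2))
          = 2 * c * K ^ (k + 2) * (n ^ (k + 1) * b ^ (k + 2)) := by ring
        _ ≤ n * (n ^ (k + 1) * b ^ (k + 2)) := by gcongr
        _ = (n * b) ^ (k + 2) := by ring
    have hrec : (n * b) ^ (k + 2)
        ≤ c * ((k + 2) * ‖s.esymm (k + 2)‖ + n ^ (k + 1) * (K * b) ^ (k + 2)) :=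
      calc (n * b) ^ (k + 2) = (n * b) * (n * b) ^ (k + 1) := by ring
        _ ≤ ‖s.sum‖ * (c * ‖s.esymm (k + 1)‖) := by gcongr
        _ ≤ _ := by
          rw [mul_left_comm]
          gcongr
          exact norm_sum_mul_norm_esymm_le s k (by positivity) hnorm
    rw [hconst]
    linarith

end Multiset

theorem Complex.div_sq_le_re_inv {w : ℂ} {r R : ℝ} (hr : 0 < r) (hre : r ≤ w.re)
    (hnorm : ‖w‖ ≤ R) : r / R ^ 2 ≤ (w⁻¹).re := by
  have hw : 0 < ‖w‖ := hr.trans_le (hre.trans (Complex.re_le_norm w))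
  rw [Complex.inv_re, Complex.normSq_eq_norm_sq]
  exact div_le_div₀ (hr.le.trans hre) hre (by positivity) (by gcongr)

theorem Complex.inv_nine_mul_le_re_inv_sub {A : ℝ} {a : ℂ} (hA : 0 < A) (ha : ‖a‖ ≤ A) :
    (9 * A)⁻¹ ≤ ((2 * A : ℝ) - a : ℂ)⁻¹.re := by
  have hre : A ≤ ((2 * A : ℝ) - a : ℂ).re := by
    rw [Complex.sub_re, Complex.ofReal_re]
    linarith [Complex.re_le_norm a]
  have hnorm : ‖((2 * A : ℝ) - a : ℂ)‖ ≤ 3 * A := by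
    have h2A : ‖((2 * A : ℝ) : ℂ)‖ = 2 * A := by simp [abs_of_pos hA]
    linarith [norm_sub_le ((2 * A : ℝ) : ℂ) a]
  convert Complex.div_sq_le_re_inv hA hre hnorm using 1
  field_simp
  ring

namespace Polynomial

theorem iterate_derivative_X_sub_C_mul {R : Type*} [CommRing R] (a : R) (q : R[X]) (n : ℕ) :
    derivative^[n] ((X - C a) * q) =
      (X - C a) * derivative^[n] q + n • derivative^[n - 1] q := by
  rw [sub_mul, iterate_derivative_sub, mul_comm X, iterate_derivative_mul_X,
    iterate_derivative_C_mul]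
  ring

theorem eval_iterate_derivative_multiset_prod_X_sub_C {K : Type*} [Field K] (s : Multiset K)
    (k : ℕ) {z : K} (hz : z ∉ s) :
    (derivative^[k] (s.map fun a => X - C a).prod).eval z =
      k ! * (s.map fun a => X - C a).prod.eval z * (s.map fun a => (z - a)⁻¹).esymm k := by
  induction s using Multiset.induction_on generalizing k with
  | empty => rcases k with _ | k <;> simp [Multiset.esymm, Multiset.powersetCard_zero_right]
  | cons a s ih =>
    rw [Multiset.mem_cons, not_or] at hz
    have hza : z - a ≠ 0 := sub_ne_zero.mpr hz.1
    rcases k with _ | k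
    · simp [Multiset.esymm]
    simp only [Multiset.map_cons, Multiset.prod_cons, iterate_derivative_X_sub_C_mul,
      Multiset.esymm_cons_succ, eval_add, eval_mul, eval_sub, eval_X, eval_C, eval_natCast,
      ih _ hz.2, add_tsub_cancel_right, nsmul_eq_mul, factorial_succ]
    field_simp
    push_cast
    ring

theorem Monic.eval_iterate_derivative_div_eval {K : Type*} [Field K] [IsAlgClosed K] {p : K[X]}
    (hp : p.Monic) (k : ℕ) {z : K} (hz : z ∉ p.roots) :
    (derivative^[k] p).eval z / p.eval z = k ! * (p.roots.map fun a => (z - a)⁻¹).esymm k := by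
  have hprod : (p.roots.map fun a => X - C a).prod = p :=
    prod_multiset_X_sub_C_of_monic_of_roots_card_eq hp IsAlgClosed.card_roots_eq_natDegree
  have hpz : p.eval z ≠ 0 := fun h => hz ((mem_roots hp.ne_zero).mpr h)
  rw [← hprod, eval_iterate_derivative_multiset_prod_X_sub_C _ k hz, hprod]
  field_simp

theorem norm_eval_iterate_derivative_div_eval_le {p : ℂ[X]} (hp : p.Monic) (k : ℕ) {z : ℂ}
    {A : ℝ} (hA : 0 < A) (hz : ∀ a ∈ p.roots, A ≤ ‖z - a‖) :
    ‖(derivative^[k] p).eval z / p.eval z‖ ≤ (p.natDegree / A) ^ k := by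
  have hz' : z ∉ p.roots := fun h => by simpa using hA.trans_le (hz z h)
  have hinv : ∀ u ∈ p.roots.map fun a => (z - a)⁻¹, ‖u‖ ≤ A⁻¹ :=
    Multiset.forall_mem_map_iff.mpr fun a ha => by
      rw [norm_inv]
      exact inv_anti₀ hA (hz a ha)
  rw [hp.eval_iterate_derivative_div_eval k hz', norm_mul, Complex.norm_natCast,
    ← IsAlgClosed.card_roots_eq_natDegree, div_eq_mul_inv]
  simpa using Multiset.factorial_mul_norm_esymm_le _ k (by positivity) hinv

theorem le_norm_eval_iterate_derivative_div_eval {p : ℂ[X]} (hp : p.Monic) (k : ℕ) {A : ℝ}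
    (hA : 0 < A) (hroots : ∀ a ∈ p.roots, ‖a‖ ≤ A) (hk : 18 ^ k * k ! ≤ p.natDegree) :
    (p.natDegree / (18 * A)) ^ k ≤
      ‖(derivative^[k] p).eval ((2 * A : ℝ) : ℂ) / p.eval ((2 * A : ℝ) : ℂ)‖ := by
  set z : ℂ := ((2 * A : ℝ) : ℂ)
  have hz : z ∉ p.roots := fun h => by
    have := (hroots z h).trans_eq' (by simp [z, abs_of_pos hA] : ‖z‖ = 2 * A)
    linarith
  set s := p.roots.map fun a => (z - a)⁻¹
  have hre : ∀ u ∈ s, (9 * A)⁻¹ ≤ u.re := Multiset.forall_mem_map_iff.mpr fun a ha =>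
    Complex.inv_nine_mul_le_re_inv_sub hA (hroots a ha)
  have hnorm : ∀ u ∈ s, ‖u‖ ≤ 9 * (9 * A)⁻¹ := Multiset.forall_mem_map_iff.mpr fun a ha => by
    rw [norm_inv, mul_inv, ← mul_assoc, mul_inv_cancel₀ (by norm_num), one_mul]
    refine inv_anti₀ hA ?_
    have h2A : ‖z‖ = 2 * A := by simp [z, abs_of_pos hA]
    linarith [norm_sub_norm_le z a, hroots a ha]
  have hcard : (Multiset.card s : ℝ) = p.natDegree := by
    rw [Multiset.card_map, IsAlgClosed.card_roots_eq_natDegree]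
  have hthreshold : 2 ^ k * k ! * 9 ^ k ≤ (Multiset.card s : ℝ) := by
    rw [hcard, mul_right_comm, ← mul_pow]
    exact_mod_cast (by norm_num : 2 * 9 = 18) ▸ hk
  have hlow := Multiset.card_mul_pow_le_norm_esymm (by positivity) (by norm_num) hre hnorm k
    hthreshold
  rw [hcard] at hlow
  rw [hp.eval_iterate_derivative_div_eval k hz, norm_mul, Complex.norm_natCast]
  calc (p.natDegree / (18 * A) : ℝ) ^ k = (p.natDegree * (9 * A)⁻¹) ^ k / 2 ^ k := by
        rw [← div_pow]
        congr 1
        field_simp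
        ring
    _ ≤ k ! * ‖s.esymm k‖ := by
        rw [div_le_iff₀ (by positivity)]
        linarith

end Polynomial

theorem stmt7_general (j : ℕ) :
    ∃ C : ℝ, 1 ≤ C ∧ ∃ N : ℕ,
      ∀ (p : Polynomial ℂ) (n : ℕ) (A : ℝ),
        p.Monic → p.natDegree = n → N ≤ n → 1 ≤ A →
        (∀ α ∈ p.roots, ‖α‖ ≤ A) →
        (∀ z : ℂ, ‖z‖ = 2 * A →
          ‖(Polynomial.derivative^[j] p).eval z / p.eval z‖
            ≤ C * (n : ℝ) ^ j / A ^ j) ∧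
        (∃ z : ℂ, ‖z‖ = 2 * A ∧
          (1 / C) * (n : ℝ) ^ j / A ^ j
            ≤ ‖(Polynomial.derivative^[j] p).eval z / p.eval z‖) := by
  refine ⟨18 ^ j, one_le_pow₀ (by norm_num), 18 ^ j * j !, ?_⟩
  rintro p n A hp rfl hN hA hroots
  have hA₀ : 0 < A := by linarith
  refine ⟨fun z hz => ?_, (2 * A : ℝ), by simp [abs_of_pos hA₀], ?_⟩
  · calc _ ≤ (p.natDegree / A) ^ j := norm_eval_iterate_derivative_div_eval_le hp j hA₀
          fun a ha => by linarith [norm_sub_norm_le z a, hroots a ha]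
      _ ≤ 18 ^ j * p.natDegree ^ j / A ^ j := by
          rw [div_pow, mul_div_assoc]
          exact le_mul_of_one_le_left (by positivity) (one_le_pow₀ (by norm_num))
  · calc 1 / 18 ^ j * (p.natDegree : ℝ) ^ j / A ^ j = (p.natDegree / (18 * A)) ^ j := by
          rw [div_pow, mul_pow]
          field_simp
      _ ≤ _ := le_norm_eval_iterate_derivative_div_eval hp j hA₀ hroots hN

theorem stmt7 (j : ℕ) (hj : 1 ≤ j) :
    ∃ C : ℝ, 1 ≤ C ∧ ∃ N : ℕ,
      ∀ (p : Polynomial ℂ) (n : ℕ) (A : ℝ),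
        p.Monic → p.natDegree = n → N ≤ n → 1 ≤ A →
        (∀ α ∈ p.roots, ‖α‖ ≤ A) →
        (∀ z : ℂ, ‖z‖ = 2 * A →
          ‖(Polynomial.derivative^[j] p).eval z / p.eval z‖
            ≤ C * (n : ℝ) ^ j / A ^ j) ∧
        (∃ z : ℂ, ‖z‖ = 2 * A ∧
          (1 / C) * (n : ℝ) ^ j / A ^ j
            ≤ ‖(Polynomial.derivative^[j] p).eval z / p.eval z‖) :=
  stmt7_general j
end

section
/- Fix real numbers 0 < s < 1 and d > 0, an integer j ≥ 1, and a nonzero polynomial Q_j of degree m. There exist a positive integer n₀ and a constant K_j ≥ 1 such that for every n ≥ n₀ and every monic polynomial p of degree n whose zeros all lie in the disc of radius A = s·n^d, one has (1/K_j)·n^{d(m−j)+j}·s^{m−j} ≤ max_{|z|=2sn^d} |Q_j(z)·p^{(j)}(z)/p(z)| ≤ K_j·n^{d(m−j)+j}·s^{m−j}. -/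
/-!
On the circle `‖z‖ = 2A` every zero of `p` lies at distance at least `A` from `z`. Writing
`p = ∏ (X - α)`, each derivative replaces the product by a sum of at most `n` products with one
factor removed, so `‖p^{(j)}(z)‖ ≤ (n / A)^j ‖p(z)‖`; together with `‖Q(z)‖ ≲ (2A)^m` this is the
upper bound.

For the lower bound, `f(z) = z^{j-m} Q(z) p^{(j)}(z) / p(z)` is a quotient `z N(z) / D(z)` of
polynomials with `deg N < deg D`, `D = X^m p` monic with all zeros in the disc of radius `A`.
Reflecting, `w ↦ f(1/w)` is holomorphic on the closed disc of radius `1/(2A)` and takes the value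
`lc(Q) n(n-1)⋯(n-j+1)` at `w = 0`, so by the maximum modulus principle some `z` on the circle has
`‖Q(z) p^{(j)}(z) / p(z)‖ ≥ ‖lc(Q)‖ n(n-1)⋯(n-j+1) (2A)^{m-j}`, which is `≳ n^j A^{m-j}` once
`n ≥ 2j`.
-/

open Polynomial Real

theorem Nat.pow_le_two_pow_mul_descFactorial {n k : ℕ} (h : 2 * k ≤ n + 2) :
    n ^ k ≤ 2 ^ k * n.descFactorial k :=
  calc n ^ k ≤ (2 * (n + 1 - k)) ^ k := Nat.pow_le_pow_left (by omega) k
    _ = 2 ^ k * (n + 1 - k) ^ k := mul_pow ..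
    _ ≤ 2 ^ k * n.descFactorial k := Nat.mul_le_mul_left _ (Nat.pow_sub_le_descFactorial n k)

theorem Real.rpow_mul_natCast_sub_add_mul_rpow_natCast_sub {x s : ℝ} (hx : 0 < x) (hs : 0 < s)
    (d : ℝ) (m j : ℕ) :
    x ^ (d * ((m : ℝ) - j) + j) * s ^ ((m : ℝ) - j) =
      x ^ j * (s * x ^ d) ^ m / (s * x ^ d) ^ j := by
  rw [rpow_add hx, rpow_mul hx.le, rpow_natCast, mul_right_comm, ← mul_rpow (by positivity) hs.le,
    mul_comm (x ^ d) s, rpow_sub (by positivity), rpow_natCast, rpow_natCast, mul_div_assoc,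
    mul_comm]

namespace Polynomial

theorem norm_eval_le_sum_norm_coeff_mul_pow {𝕜 : Type*} [NormedRing 𝕜] [NormOneClass 𝕜]
    (q : 𝕜[X]) {z : 𝕜} {r : ℝ} (hr : 1 ≤ r) (hz : ‖z‖ ≤ r) :
    ‖q.eval z‖ ≤ (q.sum fun _ a => ‖a‖) * r ^ q.natDegree := by
  rw [eval_eq_sum, Polynomial.sum_def, Polynomial.sum_def, Finset.sum_mul]
  refine (norm_sum_le _ _).trans (Finset.sum_le_sum fun k hk => ?_)
  calc ‖q.coeff k * z ^ k‖ ≤ ‖q.coeff k‖ * ‖z‖ ^ k :=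
        (norm_mul_le _ _).trans (by gcongr; exact norm_pow_le _ _)
    _ ≤ ‖q.coeff k‖ * r ^ q.natDegree := by
      gcongr
      exact (pow_le_pow_left₀ (norm_nonneg z) hz k).trans
        (pow_le_pow_right₀ hr (le_natDegree_of_mem_supp k hk))

theorem norm_eval_iterate_derivative_prod_X_sub_C_le {𝕜 : Type*} [NormedField 𝕜]
    {z : 𝕜} {A : ℝ} (hA : 0 < A) (j : ℕ) (t : Multiset 𝕜) (ht : ∀ a ∈ t, A ≤ ‖z - a‖) :
    ‖(derivative^[j] (t.map fun a => X - C a).prod).eval z‖ ≤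
      (Multiset.card t / A) ^ j * ‖((t.map fun a => X - C a).prod).eval z‖ := by
  classical
  induction j generalizing t with
  | zero => simp
  | succ j ih =>
    set P := fun u : Multiset 𝕜 => (u.map fun a => X - C a).prod
    have hderiv : derivative (P t) = (t.map fun a => P (t.erase a)).sum := by
      simp [P, derivative_prod]
    have herase : ∀ a ∈ t, ‖(derivative^[j] (P (t.erase a))).eval z‖ ≤
        (Multiset.card t / A) ^ j * (‖(P t).eval z‖ / A) := by
      intro a ha
      have hfactor : (z - a) * (P (t.erase a)).eval z = (P t).eval z := by
        simp only [P, ← Multiset.prod_map_erase ha, eval_mul, eval_sub, eval_X, eval_C]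
      refine (ih _ fun b hb => ht b (Multiset.mem_of_mem_erase hb)).trans ?_
      gcongr
      · exact Multiset.erase_le a t
      · rw [le_div_iff₀ hA, ← hfactor, norm_mul, mul_comm]
        exact mul_le_mul_of_nonneg_right (ht a ha) (norm_nonneg _)
    rw [Function.iterate_succ_apply, hderiv, ← Module.End.pow_apply, map_multiset_sum,
      eval_multisetSum]
    refine (norm_multiset_sum_le _).trans ?_
    simp only [Multiset.map_map, Function.comp_def, Module.End.pow_apply]
    refine (Multiset.sum_le_card_nsmul _ ((Multiset.card t / A) ^ j * (‖(P t).eval z‖ / A))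
      fun x hx => ?_).trans_eq ?_
    · obtain ⟨a, ha, rfl⟩ := Multiset.mem_map.1 hx
      exact herase a ha
    · rw [Multiset.card_map, nsmul_eq_mul, pow_succ]
      simp only [P]
      field_simp

theorem norm_eval_iterate_derivative_le {𝕜 : Type*} [NormedField 𝕜] [IsAlgClosed 𝕜]
    {p : 𝕜[X]} {z : 𝕜} {A : ℝ} (hA : 0 < A) (hz : ∀ α ∈ p.roots, A ≤ ‖z - α‖) (j : ℕ) :
    ‖(derivative^[j] p).eval z‖ ≤ (p.natDegree / A) ^ j * ‖p.eval z‖ := by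
  set P := (p.roots.map fun a => X - C a).prod
  have hp : C p.leadingCoeff * P = p :=
    C_leadingCoeff_mul_prod_multiset_X_sub_C IsAlgClosed.card_roots_eq_natDegree
  have hderiv : (derivative^[j] p).eval z = p.leadingCoeff * (derivative^[j] P).eval z := by
    conv_lhs => rw [← hp]
    rw [iterate_derivative_C_mul, eval_mul, eval_C]
  have heval : p.eval z = p.leadingCoeff * P.eval z := by
    conv_lhs => rw [← hp]
    rw [eval_mul, eval_C]
  have hbound := norm_eval_iterate_derivative_prod_X_sub_C_le hA j p.roots hz
  rw [IsAlgClosed.card_roots_eq_natDegree] at hbound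
  rw [hderiv, heval, norm_mul, norm_mul, mul_left_comm]
  exact mul_le_mul_of_nonneg_left hbound (norm_nonneg _)

theorem eval_reflect_eq_pow_mul_eval_inv {𝕜 : Type*} [Field 𝕜] {f : 𝕜[X]} {M : ℕ}
    (hf : f.natDegree ≤ M) {w : 𝕜} (hw : w ≠ 0) :
    (reflect M f).eval w = w ^ M * f.eval w⁻¹ := by
  let _ : Invertible w⁻¹ := invertibleOfNonzero (inv_ne_zero hw)
  have h := eval₂_reflect_mul_pow (RingHom.id 𝕜) w⁻¹ M f hf
  rw [invOf_eq_inv, inv_inv] at h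
  rw [← eval₂_id, ← eval₂_id, ← h, inv_pow, mul_left_comm, mul_inv_cancel₀ (pow_ne_zero M hw),
    mul_one]

theorem eval_zero_reflect {R : Type*} [Semiring R] (f : R[X]) (M : ℕ) :
    (reflect M f).eval 0 = f.coeff M := by
  rw [← coeff_zero_eq_eval_zero, coeff_reflect, revAt_le (Nat.zero_le M), Nat.sub_zero]

theorem exists_norm_eq_norm_coeff_le_norm_mul_eval_div_eval {N D : ℂ[X]} (hD : D.Monic)
    (hND : N.natDegree < D.natDegree) {R : ℝ} (hR : 0 < R) (hroots : ∀ α ∈ D.roots, ‖α‖ < R) :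
    ∃ z : ℂ, ‖z‖ = R ∧ ‖N.coeff (D.natDegree - 1)‖ ≤ ‖z * (N.eval z / D.eval z)‖ := by
  have hN : N.natDegree ≤ D.natDegree - 1 := by omega
  set g : ℂ → ℂ := fun w => (reflect (D.natDegree - 1) N).eval w / (reflect D.natDegree D).eval w
  have hreflect_ne : ∀ w : ℂ, ‖w‖ ≤ R⁻¹ → (reflect D.natDegree D).eval w ≠ 0 := by
    intro w hw
    rcases eq_or_ne w 0 with rfl | hw0
    · rw [eval_zero_reflect, hD.coeff_natDegree]
      exact one_ne_zero
    rw [eval_reflect_eq_pow_mul_eval_inv le_rfl hw0]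
    refine mul_ne_zero (pow_ne_zero _ hw0) fun h => ?_
    have := hroots _ ((mem_roots hD.ne_zero).2 h)
    rw [norm_inv, inv_lt_comm₀ (norm_pos_iff.2 hw0) hR] at this
    linarith
  have hg : DiffContOnCl ℂ g (Metric.ball 0 R⁻¹) := by
    refine DifferentiableOn.diffContOnCl fun w hw => ?_
    rw [closure_ball _ (inv_ne_zero hR.ne'), mem_closedBall_zero_iff] at hw
    exact (N.reflect _).differentiableAt.div (D.reflect _).differentiableAt
      (hreflect_ne w hw) |>.differentiableWithinAt
  obtain ⟨w, hw, hmax⟩ := Complex.exists_mem_frontier_isMaxOn_norm Metric.isBounded_ball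
    (Metric.nonempty_ball.2 (inv_pos.2 hR)) hg
  rw [frontier_ball _ (inv_ne_zero hR.ne'), mem_sphere_zero_iff_norm] at hw
  have hw0 : w ≠ 0 := norm_pos_iff.1 (hw ▸ inv_pos.2 hR)
  refine ⟨w⁻¹, by rw [norm_inv, hw, inv_inv], ?_⟩
  have hg0 : g 0 = N.coeff (D.natDegree - 1) := by
    simp only [g, eval_zero_reflect, hD.coeff_natDegree, div_one]
  have hgw : g w = w⁻¹ * (N.eval w⁻¹ / D.eval w⁻¹) := by
    have hpow : w ^ D.natDegree = w ^ (D.natDegree - 1) * w := by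
      rw [← pow_succ]
      congr 1
      omega
    simp only [g, eval_reflect_eq_pow_mul_eval_inv hN hw0,
      eval_reflect_eq_pow_mul_eval_inv le_rfl hw0, hpow]
    field_simp
  rw [← hg0, ← hgw]
  exact hmax (subset_closure (Metric.mem_ball_self (inv_pos.2 hR)))

theorem norm_eval_mul_iterate_derivative_div_le (Q p : ℂ[X]) (j : ℕ) {A : ℝ} (hA : 1 ≤ 2 * A)
    (hroots : ∀ α ∈ p.roots, ‖α‖ ≤ A) {z : ℂ} (hz : ‖z‖ = 2 * A) :
    ‖Q.eval z * ((derivative^[j] p).eval z / p.eval z)‖ ≤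
      (Q.sum fun _ a => ‖a‖) * 2 ^ Q.natDegree * (p.natDegree ^ j * A ^ Q.natDegree / A ^ j) := by
  have hA0 : 0 < A := by linarith
  have hdist : ∀ α ∈ p.roots, A ≤ ‖z - α‖ := fun α hα => by
    linarith [norm_sub_norm_le z α, hroots α hα]
  have hQ := norm_eval_le_sum_norm_coeff_mul_pow Q hA hz.le
  have hratio : ‖(derivative^[j] p).eval z‖ / ‖p.eval z‖ ≤ (p.natDegree / A) ^ j :=
    div_le_of_le_mul₀ (norm_nonneg _) (by positivity) (norm_eval_iterate_derivative_le hA0 hdist j)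
  calc ‖Q.eval z * ((derivative^[j] p).eval z / p.eval z)‖
      = ‖Q.eval z‖ * (‖(derivative^[j] p).eval z‖ / ‖p.eval z‖) := by rw [norm_mul, norm_div]
    _ ≤ (Q.sum fun _ a => ‖a‖) * (2 * A) ^ Q.natDegree * (p.natDegree / A) ^ j :=
      mul_le_mul hQ hratio (by positivity)
        (mul_nonneg (Finset.sum_nonneg fun _ _ => norm_nonneg _) (by positivity))
    _ = _ := by rw [mul_pow, div_pow]; ring

theorem exists_norm_eq_descFactorial_le_norm_eval_mul_iterate_derivative_div (Q : ℂ[X])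
    {p : ℂ[X]} (hp : p.Monic) {j : ℕ} (hj : 1 ≤ j) (hjn : j ≤ p.natDegree) {R : ℝ} (hR : 0 < R)
    (hroots : ∀ α ∈ p.roots, ‖α‖ < R) :
    ∃ z : ℂ, ‖z‖ = R ∧ ‖Q.leadingCoeff‖ * p.natDegree.descFactorial j * R ^ Q.natDegree ≤
      R ^ j * ‖Q.eval z * ((derivative^[j] p).eval z / p.eval z)‖ := by
  set n := p.natDegree
  set m := Q.natDegree
  set N := Q * X ^ (j - 1) * derivative^[j] p
  set D := X ^ m * p
  have hD : D.Monic := (monic_X_pow m).mul hp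
  have hDdeg : D.natDegree = m + n := by rw [(monic_X_pow m).natDegree_mul hp, natDegree_X_pow]
  have hQX : (Q * X ^ (j - 1)).natDegree ≤ m + (j - 1) :=
    natDegree_mul_le.trans (add_le_add le_rfl (natDegree_X_pow_le _))
  have hNdeg : N.natDegree ≤ m + (j - 1) + (n - j) :=
    natDegree_mul_le.trans (add_le_add hQX (natDegree_iterate_derivative p j))
  have hcoeff : N.coeff (D.natDegree - 1) = Q.leadingCoeff * n.descFactorial j := by
    rw [hDdeg, show m + n - 1 = m + (j - 1) + (n - j) by omega,
      coeff_mul_add_eq_of_natDegree_le hQX (natDegree_iterate_derivative p j),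
      coeff_mul_add_eq_of_natDegree_le le_rfl (natDegree_X_pow_le _), coeff_X_pow_self,
      coeff_iterate_derivative, Nat.sub_add_cancel hjn, hp.coeff_natDegree, nsmul_eq_mul, mul_one,
      mul_one, leadingCoeff]
  have hDroots : ∀ α ∈ D.roots, ‖α‖ < R := by
    intro α hα
    rw [roots_mul hD.ne_zero, roots_X_pow, Multiset.mem_add] at hα
    rcases hα with hα | hα
    · rw [Multiset.mem_singleton.1 (Multiset.mem_of_mem_nsmul hα), norm_zero]
      exact hR
    · exact hroots α hα
  obtain ⟨z, hz, hle⟩ := exists_norm_eq_norm_coeff_le_norm_mul_eval_div_eval hD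
    (hNdeg.trans_lt (by omega)) hR hDroots
  refine ⟨z, hz, ?_⟩
  have hz0 : z ≠ 0 := norm_pos_iff.1 (hz ▸ hR)
  have hpz : p.eval z ≠ 0 := fun h => (hroots z ((mem_roots hp.ne_zero).2 h)).ne hz
  have hfactor : z * (N.eval z / D.eval z) * z ^ m =
      z ^ j * (Q.eval z * ((derivative^[j] p).eval z / p.eval z)) := by
    have hpow : z ^ j = z * z ^ (j - 1) := by rw [← pow_succ']; congr 1; omega
    simp only [N, D, eval_mul, eval_pow, eval_X, hpow]
    field_simp
  calc ‖Q.leadingCoeff‖ * n.descFactorial j * R ^ m = ‖N.coeff (D.natDegree - 1)‖ * ‖z‖ ^ m := by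
        rw [hcoeff, hz, norm_mul, Complex.norm_natCast]
    _ ≤ ‖z * (N.eval z / D.eval z)‖ * ‖z‖ ^ m := by gcongr
    _ = R ^ j * ‖Q.eval z * ((derivative^[j] p).eval z / p.eval z)‖ := by
        rw [← norm_pow, ← norm_mul, hfactor, norm_mul, norm_pow, hz]

theorem exists_norm_eq_le_norm_eval_mul_iterate_derivative_div (Q : ℂ[X]) {p : ℂ[X]}
    (hp : p.Monic) {j : ℕ} (hj : 1 ≤ j) (hjn : 2 * j ≤ p.natDegree) {A : ℝ} (hA : 0 < A)
    (hroots : ∀ α ∈ p.roots, ‖α‖ ≤ A) :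
    ∃ z : ℂ, ‖z‖ = 2 * A ∧
      ‖Q.leadingCoeff‖ * 2 ^ Q.natDegree / 4 ^ j * (p.natDegree ^ j * A ^ Q.natDegree / A ^ j) ≤
        ‖Q.eval z * ((derivative^[j] p).eval z / p.eval z)‖ := by
  obtain ⟨z, hz, hle⟩ := exists_norm_eq_descFactorial_le_norm_eval_mul_iterate_derivative_div Q hp
    hj (by omega) (R := 2 * A) (by positivity) fun α hα => (hroots α hα).trans_lt (by linarith)
  refine ⟨z, hz, le_of_mul_le_mul_left (le_trans ?_ hle) (by positivity : (0 : ℝ) < (2 * A) ^ j)⟩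
  have hdesc : (p.natDegree : ℝ) ^ j / 2 ^ j ≤ p.natDegree.descFactorial j := by
    rw [div_le_iff₀' (by positivity)]
    exact_mod_cast Nat.pow_le_two_pow_mul_descFactorial (by omega)
  calc (2 * A) ^ j * (‖Q.leadingCoeff‖ * 2 ^ Q.natDegree / 4 ^ j *
        (p.natDegree ^ j * A ^ Q.natDegree / A ^ j))
      = ‖Q.leadingCoeff‖ * (p.natDegree ^ j / 2 ^ j) * (2 * A) ^ Q.natDegree := by
        rw [show (4 : ℝ) ^ j = 2 ^ j * 2 ^ j by rw [← mul_pow]; norm_num]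
        field_simp
        ring
    _ ≤ ‖Q.leadingCoeff‖ * p.natDegree.descFactorial j * (2 * A) ^ Q.natDegree := by gcongr

end Polynomial

theorem stmt9_general (s d : ℝ) (hs0 : 0 < s) (hd : 0 < d)
    (j : ℕ) (hj : 1 ≤ j) (Q : Polynomial ℂ) (hQ : Q ≠ 0) (m : ℕ) (hm : Q.natDegree = m) :
    ∃ n₀ : ℕ, 0 < n₀ ∧ ∃ K : ℝ, 1 ≤ K ∧
      ∀ n : ℕ, n₀ ≤ n →
        ∀ p : Polynomial ℂ, p.Monic → p.natDegree = n →
          (∀ α ∈ p.roots, ‖α‖ ≤ s * (n : ℝ) ^ d) →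
          (∀ z : ℂ, ‖z‖ = 2 * s * (n : ℝ) ^ d →
            ‖Q.eval z * ((Polynomial.derivative^[j] p).eval z / p.eval z)‖
              ≤ K * (n : ℝ) ^ (d * ((m : ℝ) - j) + j) * s ^ ((m : ℝ) - j)) ∧
          (∃ z : ℂ, ‖z‖ = 2 * s * (n : ℝ) ^ d ∧
            (1 / K) * (n : ℝ) ^ (d * ((m : ℝ) - j) + j) * s ^ ((m : ℝ) - j)
              ≤ ‖Q.eval z * ((Polynomial.derivative^[j] p).eval z / p.eval z)‖) := by
  set C := (Q.sum fun _ a => ‖a‖) * 2 ^ m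
  set c := ‖Q.leadingCoeff‖ * 2 ^ m / 4 ^ j
  have hc : 0 < c := by
    have := norm_pos_iff.2 (leadingCoeff_ne_zero.2 hQ)
    positivity
  obtain ⟨N₀, hN₀⟩ := Filter.eventually_atTop.1 <|
    ((tendsto_rpow_atTop hd).comp tendsto_natCast_atTop_atTop |>.const_mul_atTop
      (by positivity : 0 < 2 * s)).eventually_ge_atTop 1
  refine ⟨max N₀ (2 * j), by omega, max 1 (max C c⁻¹), le_max_left _ _,
    fun n hn p hp hpn hroots => ?_⟩
  set A := s * (n : ℝ) ^ d
  have hA : 1 ≤ 2 * A := by simpa [A, mul_assoc] using hN₀ n (le_of_max_le_left hn)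
  have hscale : ∀ K : ℝ, K * (n : ℝ) ^ (d * ((m : ℝ) - j) + j) * s ^ ((m : ℝ) - j) =
      K * (n ^ j * A ^ m / A ^ j) := fun K => by
    rw [mul_assoc, Real.rpow_mul_natCast_sub_add_mul_rpow_natCast_sub
      (by exact_mod_cast (show 0 < n by omega)) hs0]
  have hcircle : ∀ z : ℂ, ‖z‖ = 2 * s * (n : ℝ) ^ d ↔ ‖z‖ = 2 * A := fun z => by rw [mul_assoc]
  simp only [hscale, hcircle]
  constructor
  · intro z hz
    have hup := norm_eval_mul_iterate_derivative_div_le Q p j hA hroots hz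
    rw [hm, hpn] at hup
    refine hup.trans ?_
    gcongr
    exact le_max_of_le_right (le_max_left _ _)
  · obtain ⟨z, hz, hlow⟩ := exists_norm_eq_le_norm_eval_mul_iterate_derivative_div Q hp hj
      (by omega) (by linarith) hroots
    rw [hm, hpn] at hlow
    refine ⟨z, hz, le_trans (mul_le_mul_of_nonneg_right ?_ (by positivity)) hlow⟩
    rw [one_div, inv_le_comm₀ (by positivity) hc]
    exact le_max_of_le_right (le_max_right _ _)

theorem stmt9 (s d : ℝ) (hs0 : 0 < s) (hs1 : s < 1) (hd : 0 < d)
    (j : ℕ) (hj : 1 ≤ j) (Q : Polynomial ℂ) (hQ : Q ≠ 0) (m : ℕ) (hm : Q.natDegree = m) :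
    ∃ n₀ : ℕ, 0 < n₀ ∧ ∃ K : ℝ, 1 ≤ K ∧
      ∀ n : ℕ, n₀ ≤ n →
        ∀ p : Polynomial ℂ, p.Monic → p.natDegree = n →
          (∀ α ∈ p.roots, ‖α‖ ≤ s * (n : ℝ) ^ d) →
          (∀ z : ℂ, ‖z‖ = 2 * s * (n : ℝ) ^ d →
            ‖Q.eval z * ((Polynomial.derivative^[j] p).eval z / p.eval z)‖
              ≤ K * (n : ℝ) ^ (d * ((m : ℝ) - j) + j) * s ^ ((m : ℝ) - j)) ∧
          (∃ z : ℂ, ‖z‖ = 2 * s * (n : ℝ) ^ d ∧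
            (1 / K) * (n : ℝ) ^ (d * ((m : ℝ) - j) + j) * s ^ ((m : ℝ) - j)
              ≤ ‖Q.eval z * ((Polynomial.derivative^[j] p).eval z / p.eval z)‖) :=
  stmt9_general s d hs0 hd j hj Q hQ m hm
end
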